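/- For any r-tuple (n₁, …, n_r) of nonnegative integers and any set S, the number of words in the rearrangement class R(n₁, …, n_r) with descent set S equals the number of words in R(n₁, …, n_r) with rise set S. -/

import Mathlib

/-- Descent set: positions `i`, `1 ≤ i ≤ n-1`, with `x_i > x_{i+1}`. -/
def Word.DES {X : Type*} [PartialOrder X] (w : List X) : Set ℕ :=
  {i | ∃ h : i < w.length, 0 < i ∧ w[i]'h < w[i - 1]'(by omega)}

/-- Rise set: positions `i`, `1 ≤ i ≤ n-1`, with `x_i < x_{i+1}`. -/
def Word.ASC {X : Type*} [PartialOrder X] (w : List X) : Set ℕ :=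
  {i | ∃ h : i < w.length, 0 < i ∧ w[i - 1]'(by omega) < w[i]'h}

/-!
For a finite set `T` of cut positions, `DES w ⊆ T` says that `w` weakly increases on every block
between consecutive cuts, and `ASC w ⊆ T` that it weakly decreases there. Reversing every block is
an involution preserving the content of `w` and exchanging the two conditions, so in every
rearrangement class as many words satisfy `DES w ⊆ T` as `ASC w ⊆ T`. Möbius inversion over the
subsets of `T` turns this into equality of the numbers of words with `DES w = T` and `ASC w = T`;
for infinite `S` both sets of words are empty.
-/

open Finset

theorem Finset.eq_of_forall_sum_powerset_eq {β M : Type*} [AddCancelCommMonoid M]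
    {f g : Finset β → M} (h : ∀ T : Finset β, ∑ U ∈ T.powerset, f U = ∑ U ∈ T.powerset, g U)
    (T : Finset β) : f T = g T := by
  classical
  induction T using Finset.strongInduction with
  | H T ih =>
    have hT := h T
    rw [← sum_erase_add _ _ (mem_powerset_self T), ← sum_erase_add _ _ (mem_powerset_self T),
      sum_congr rfl fun U hU => ih U ?_] at hT
    · exact add_left_cancel hT
    · rw [mem_erase, mem_powerset] at hU
      exact hU.2.ssubset_of_ne hU.1

open Classical in
theorem Finset.card_filter_subset_eq_sum_powerset {β γ : Type*} (W : Finset β) (F : β → Set γ)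
    (T : Finset γ) : #{w ∈ W | F w ⊆ T} = ∑ U ∈ T.powerset, #{w ∈ W | F w = U} := by
  rw [card_eq_sum_card_fiberwise (f := fun w => {x ∈ T | x ∈ F w}) (t := T.powerset)
    fun w _ => mem_powerset.2 (filter_subset _ _)]
  refine sum_congr rfl fun U hU => congrArg card ?_
  ext w
  simp only [mem_filter, mem_powerset] at hU ⊢
  constructor
  · rintro ⟨⟨hw, hFT⟩, rfl⟩
    exact ⟨hw, by ext; simpa using @hFT _⟩
  · rintro ⟨hw, hFU⟩
    rw [hFU]
    exact ⟨⟨hw, coe_subset.2 hU⟩, by ext; simpa using @hU _⟩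

theorem List.sum_count_eq_length {α : Type*} [Fintype α] [DecidableEq α] (l : List α) :
    ∑ a, l.count a = l.length := by
  rw [← l.sum_toFinset_count_eq_length]
  exact (sum_subset (subset_univ _) fun a _ ha => List.count_eq_zero.2 (by simpa using ha)).symm

theorem List.finite_setOf_count_eq {α : Type*} [Fintype α] [DecidableEq α] (n : α → ℕ) :
    {w : List α | ∀ a, w.count a = n a}.Finite :=
  (List.finite_length_eq α (∑ a, n a)).subset fun w hw =>
    (List.sum_count_eq_length w).symm.trans (sum_congr rfl fun a _ => hw a)

namespace Word

variable {α : Type*}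

/-- Cuts `l` into blocks at the positions listed in `s`, positions being counted so that the head
of `l` sits at position `p`. -/
def chop (p : ℕ) : List ℕ → List α → List (List α)
  | [], l => [l]
  | a :: s, l => l.take (a - p) :: chop a s (l.drop (a - p))

@[simp]
theorem flatten_chop (p : ℕ) (s : List ℕ) (l : List α) : (chop p s l).flatten = l := by
  induction s generalizing p l with
  | nil => simp [chop]
  | cons a s ih => simp [chop, ih]

theorem length_flatten_map_chop {f : List α → List α} (hf : ∀ b, (f b).length = b.length)
    (p : ℕ) (s : List ℕ) (l : List α) : ((chop p s l).map f).flatten.length = l.length := by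
  rw [List.length_flatten, List.map_map, show List.length ∘ f = List.length from funext hf,
    ← List.length_flatten, flatten_chop]

theorem chop_flatten_map {f : List α → List α} (hf : ∀ b, (f b).length = b.length)
    (p : ℕ) (s : List ℕ) (l : List α) :
    chop p s ((chop p s l).map f).flatten = (chop p s l).map f := by
  induction s generalizing p l with
  | nil => simp [chop]
  | cons a s ih =>
    set d := a - p
    set X := ((chop a s (l.drop d)).map f).flatten
    have hX : X.length = l.length - d := by simp [X, length_flatten_map_chop hf]
    have hfu : (f (l.take d)).length = min d l.length := by simp [hf]
    obtain ⟨htake, hdrop⟩ : (f (l.take d) ++ X).take d = f (l.take d) ∧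
        (f (l.take d) ++ X).drop d = X := by
      by_cases hd : d ≤ l.length
      · exact ⟨List.take_left' (by omega), List.drop_left' (by omega)⟩
      · rw [List.eq_nil_of_length_eq_zero (show X.length = 0 by omega), List.append_nil]
        exact ⟨List.take_of_length_le (by omega), List.drop_of_length_le (by omega)⟩
    simp only [chop, List.map_cons, List.flatten_cons]
    rw [htake, hdrop, ih]

/-- Cut `k` separates positions `k - 1` and `k`, as in `DES` and `ASC`. -/
def IsChainExcept (R : α → α → Prop) (A : Set ℕ) (l : List α) : Prop :=
  ∀ j (h : j + 1 < l.length), j + 1 ∉ A → R l[j] l[j + 1]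

variable {R : α → α → Prop}

theorem isChainExcept_inter {A B : Set ℕ} {l : List α} :
    IsChainExcept R (A ∩ B) l ↔ IsChainExcept R A l ∧ IsChainExcept R B l := by
  simp only [IsChainExcept, Set.mem_inter_iff, not_and_or]
  grind

theorem isChain_take_iff {d : ℕ} {l : List α} :
    (l.take d).IsChain R ↔ IsChainExcept R (Set.Ici d) l := by
  simp only [List.isChain_iff_getElem, IsChainExcept, List.length_take, List.getElem_take,
    Set.mem_Ici, not_le]
  grind

theorem isChainExcept_drop_iff {A : Set ℕ} {d : ℕ} {l : List α} :
    IsChainExcept R A (l.drop d) ↔ IsChainExcept R (Set.Iic d ∪ (· - d) ⁻¹' A) l := by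
  simp only [IsChainExcept, List.length_drop, List.getElem_drop, Set.mem_union, Set.mem_Iic,
    Set.mem_preimage, not_or, not_le]
  constructor
  · intro h j hj ⟨hdj, hA⟩
    obtain ⟨i, rfl⟩ := Nat.exists_eq_add_of_le (show d ≤ j by omega)
    simpa [Nat.add_assoc] using h i (by omega) (by simpa [Nat.add_assoc] using hA)
  · intro h i hi hA
    simpa [Nat.add_assoc] using
      h (d + i) (by omega) ⟨by omega, by simpa [Nat.add_assoc] using hA⟩

theorem forall_isChain_chop_iff {p : ℕ} {s : List ℕ} (hs : (p :: s).Pairwise (· ≤ ·))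
    (l : List α) : (∀ b ∈ chop p s l, b.IsChain R) ↔ IsChainExcept R {k | p + k ∈ s} l := by
  induction s generalizing p l with
  | nil => simp [chop, IsChainExcept, List.isChain_iff_getElem]
  | cons a s ih =>
    obtain ⟨hpa, hps⟩ := List.pairwise_cons.1 hs
    have has : ∀ x ∈ s, a ≤ x := (List.pairwise_cons.1 hps).1
    have hcuts : Set.Ici (a - p) ∩ (Set.Iic (a - p) ∪ (· - (a - p)) ⁻¹' {k | a + k ∈ s})
        = {k | p + k ∈ a :: s} := by
      ext k
      simp only [Set.mem_inter_iff, Set.mem_Ici, Set.mem_union, Set.mem_Iic, Set.mem_preimage,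
        Set.mem_ofPred_eq, List.mem_cons]
      grind
    rw [chop, List.forall_mem_cons, ih hps, isChain_take_iff, isChainExcept_drop_iff,
      ← isChainExcept_inter, hcuts]

def reverseBlocks (T : Finset ℕ) (w : List α) : List α :=
  ((chop 0 (T.sort) w).map List.reverse).flatten

theorem reverseBlocks_perm (T : Finset ℕ) (w : List α) : (reverseBlocks T w).Perm w := by
  conv_rhs => rw [← flatten_chop 0 (T.sort) w]
  exact List.Perm.flatten_congr
    (List.forall₂_map_left_iff.2 (List.forall₂_same.2 fun b _ => b.reverse_perm))

theorem chop_reverseBlocks (T : Finset ℕ) (w : List α) :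
    chop 0 (T.sort) (reverseBlocks T w) = (chop 0 (T.sort) w).map List.reverse :=
  chop_flatten_map (fun b => b.length_reverse) 0 _ w

theorem reverseBlocks_involutive (T : Finset ℕ) :
    Function.Involutive (reverseBlocks (α := α) T) := by
  intro w
  rw [reverseBlocks, chop_reverseBlocks, List.map_map]
  simp

theorem forall_isChain_chop_sort_iff (T : Finset ℕ) (w : List α) :
    (∀ b ∈ chop 0 (T.sort) w, b.IsChain R) ↔ IsChainExcept R T w := by
  have hs : (0 :: T.sort).Pairwise (· ≤ ·) :=
    List.pairwise_cons.2 ⟨fun x _ => x.zero_le, T.pairwise_sort _⟩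
  simpa using forall_isChain_chop_iff hs w

theorem isChainExcept_reverseBlocks_iff (T : Finset ℕ) (w : List α) :
    IsChainExcept R T (reverseBlocks T w) ↔ IsChainExcept (flip R) T w := by
  simp only [← forall_isChain_chop_sort_iff, chop_reverseBlocks, List.forall_mem_map,
    List.isChain_reverse]
  rfl

theorem finite_DES {X : Type*} [PartialOrder X] (w : List X) : (DES w).Finite :=
  (Set.finite_Iio w.length).subset fun _ ⟨h, _⟩ => h

theorem finite_ASC {X : Type*} [PartialOrder X] (w : List X) : (ASC w).Finite :=
  (Set.finite_Iio w.length).subset fun _ ⟨h, _⟩ => h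

variable {X : Type*} [LinearOrder X]

theorem DES_subset_iff (w : List X) (A : Set ℕ) :
    DES w ⊆ A ↔ IsChainExcept (· ≤ ·) A w := by
  constructor
  · intro h j hj hA
    by_contra hlt
    exact hA (h ⟨hj, j.succ_pos, by simpa using lt_of_not_ge hlt⟩)
  · rintro h i ⟨hi, hi0, hlt⟩
    by_contra hA
    obtain ⟨j, rfl⟩ : ∃ j, i = j + 1 := ⟨i - 1, by omega⟩
    exact (h j hi (by simpa using hA)).not_gt (by simpa using hlt)

theorem ASC_eq_DES_map_toDual (w : List X) : ASC w = DES (w.map OrderDual.toDual) := by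
  ext i
  simp [ASC, DES]

theorem ASC_subset_iff (w : List X) (A : Set ℕ) :
    ASC w ⊆ A ↔ IsChainExcept (· ≥ ·) A w := by
  rw [ASC_eq_DES_map_toDual, DES_subset_iff]
  simp [IsChainExcept]

theorem ASC_reverseBlocks_subset_iff (T : Finset ℕ) (w : List X) :
    ASC (reverseBlocks T w) ⊆ T ↔ DES w ⊆ T := by
  rw [ASC_subset_iff, DES_subset_iff, isChainExcept_reverseBlocks_iff]
  rfl

theorem DES_reverseBlocks_subset_iff (T : Finset ℕ) (w : List X) :
    DES (reverseBlocks T w) ⊆ T ↔ ASC w ⊆ T := by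
  rw [ASC_subset_iff, DES_subset_iff, isChainExcept_reverseBlocks_iff]
  rfl

open Classical in
theorem card_filter_DES_subset_eq_card_filter_ASC_subset (W : Finset (List X))
    (hW : ∀ w ∈ W, ∀ v, v.Perm w → v ∈ W) (T : Finset ℕ) :
    #{w ∈ W | DES w ⊆ T} = #{w ∈ W | ASC w ⊆ T} := by
  refine card_nbij' (reverseBlocks T) (reverseBlocks T) ?_ ?_
    (fun w _ => reverseBlocks_involutive T w) (fun w _ => reverseBlocks_involutive T w)
  · intro w hw
    simp only [coe_filter, Set.mem_ofPred_eq] at hw ⊢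
    exact ⟨hW w hw.1 _ (reverseBlocks_perm T w), (ASC_reverseBlocks_subset_iff T w).2 hw.2⟩
  · intro w hw
    simp only [coe_filter, Set.mem_ofPred_eq] at hw ⊢
    exact ⟨hW w hw.1 _ (reverseBlocks_perm T w), (DES_reverseBlocks_subset_iff T w).2 hw.2⟩

open Classical in
theorem card_filter_DES_eq_card_filter_ASC (W : Finset (List X))
    (hW : ∀ w ∈ W, ∀ v, v.Perm w → v ∈ W) (S : Set ℕ) :
    #{w ∈ W | DES w = S} = #{w ∈ W | ASC w = S} := by
  by_cases hS : S.Finite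
  · obtain ⟨T, rfl⟩ := hS.exists_finset_coe
    refine eq_of_forall_sum_powerset_eq (f := fun U : Finset ℕ => #{w ∈ W | DES w = U})
      (g := fun U : Finset ℕ => #{w ∈ W | ASC w = U}) (fun T => ?_) T
    rw [← card_filter_subset_eq_sum_powerset, ← card_filter_subset_eq_sum_powerset]
    exact card_filter_DES_subset_eq_card_filter_ASC_subset W hW T
  · rw [filter_false_of_mem fun w _ (h : DES w = S) => hS (h ▸ finite_DES w),
      filter_false_of_mem fun w _ (h : ASC w = S) => hS (h ▸ finite_ASC w)]

end Word

/-- Over the rearrangement class `R(n₁, …, n_r)` of words on the totally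
ordered alphabet with `r` letters having exactly `nn j` occurrences of the
letter `j`, the set-valued statistics `DES` and `ASC` are equidistributed. -/
theorem stmt_5 (r : ℕ) (nn : Fin r → ℕ) (S : Set ℕ) :
    {w : List (Fin r) | (∀ j, w.count j = nn j) ∧ Word.DES w = S}.ncard
      = {w : List (Fin r) | (∀ j, w.count j = nn j) ∧ Word.ASC w = S}.ncard := by
  have hfin := List.finite_setOf_count_eq nn
  have hperm : ∀ w ∈ hfin.toFinset, ∀ v, v.Perm w → v ∈ hfin.toFinset := by
    intro w hw v hv
    simpa [hv.count_eq] using hw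
  have h := Word.card_filter_DES_eq_card_filter_ASC hfin.toFinset hperm S
  rw [← Set.ncard_coe_finset, ← Set.ncard_coe_finset, coe_filter, coe_filter] at h
  simpa using h
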